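/- Let ħ ≠ 0 be real, V: ℝ² → ℝ smooth, and f_{0,0}, f_{1,0}, f_{2,0}, f_{0,2}: ℝ² → ℝ smooth. Define the second-order operator X on smooth ψ: ℝ² → ℂ by Xψ = (1/2) Σ_{j=0}^{2} [ f_{j,0}·(p̂₁^j p̂₂^{2−j} ψ) + p̂₁^j p̂₂^{2−j}(f_{j,0}·ψ) ] + f_{0,2}·ψ. Then X commutes with Ĥ (i.e., X(Ĥψ) = Ĥ(Xψ) for all smooth ψ) if and only if the following equations hold identically on ℝ²: ∂_y f_{0,0} = 0; ∂_x f_{0,0} + ∂_y f_{1,0} = 0; ∂_x f_{1,0} + ∂_y f_{2,0} = 0; ∂_x f_{2,0} = 0; 2 ∂_y f_{0,2} = f_{1,0} ∂_x V + 2 f_{0,0} ∂_y V; and 2 ∂_x f_{0,2} = 2 f_{2,0} ∂_x V + f_{1,0} ∂_y V. In particular, for N = 2 the quantum determining equations contain no ħ-dependent correction terms and are identical to the classical determining equations. -/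

import Mathlib

/-!
Moving all derivatives to the right writes `X` as a second-order operator with principal
coefficients `-ħ² f_{j,0}`. The commutator of any second-order operator with `Ĥ = -ħ²Δ + V` is a
third-order operator with explicit coefficients, and such an operator annihilates every smooth
function iff all its coefficients vanish (test against monomials). The third-order coefficients of
`[X, Ĥ]` are `-2ħ⁴` times the Killing equations for `(f_{2,0}, f_{1,0}, f_{0,0})`. The components
of a Killing tensor of the plane are quadratic polynomials, so all `ħ⁴` contributions to the lower
coefficients cancel: the second-order coefficients vanish, the first-order ones are `ħ²` times the
classical equations for `f_{0,2}`, and the zeroth-order one vanishes once those hold.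
-/

noncomputable section

/-- Partial derivative with respect to `x` of a function on `ℝ²`. -/
def pdx (f : ℝ × ℝ → ℝ) : ℝ × ℝ → ℝ := fun q => fderiv ℝ f q (1, 0)

/-- Partial derivative with respect to `y` of a function on `ℝ²`. -/
def pdy (f : ℝ × ℝ → ℝ) : ℝ × ℝ → ℝ := fun q => fderiv ℝ f q (0, 1)

/-- Partial derivative with respect to `x` of a complex-valued function on `ℝ²`. -/
def pdxC (f : ℝ × ℝ → ℂ) : ℝ × ℝ → ℂ := fun q => fderiv ℝ f q (1, 0)

/-- Partial derivative with respect to `y` of a complex-valued function on `ℝ²`. -/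
def pdyC (f : ℝ × ℝ → ℂ) : ℝ × ℝ → ℂ := fun q => fderiv ℝ f q (0, 1)

/-- The momentum operator `p̂₁ψ = −iħ ∂ψ/∂x`. -/
def P1 (hbar : ℝ) (ψ : ℝ × ℝ → ℂ) : ℝ × ℝ → ℂ := fun q =>
  -Complex.I * (hbar : ℂ) * pdxC ψ q

/-- The momentum operator `p̂₂ψ = −iħ ∂ψ/∂y`. -/
def P2 (hbar : ℝ) (ψ : ℝ × ℝ → ℂ) : ℝ × ℝ → ℂ := fun q =>
  -Complex.I * (hbar : ℂ) * pdyC ψ q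

/-- The quantum Hamiltonian `Ĥψ = −ħ²(ψ_xx + ψ_yy) + V ψ`. -/
def Hop (hbar : ℝ) (V : ℝ × ℝ → ℝ) (ψ : ℝ × ℝ → ℂ) : ℝ × ℝ → ℂ := fun q =>
  -(hbar : ℂ) ^ 2 * (pdxC (pdxC ψ) q + pdyC (pdyC ψ) q) + (V q : ℂ) * ψ q

/-- The second-order symmetrized operator
`Xψ = (1/2) Σ_{j=0}^{2} [f_{j,0}·(p̂₁^j p̂₂^{2−j} ψ) + p̂₁^j p̂₂^{2−j}(f_{j,0}·ψ)] + f_{0,2}·ψ`. -/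
def X2op (hbar : ℝ) (f00 f10 f20 f02 : ℝ × ℝ → ℝ) (ψ : ℝ × ℝ → ℂ) : ℝ × ℝ → ℂ := fun q =>
  (1 / 2) *
      (((f00 q : ℂ) * ((P2 hbar)^[2] ψ) q +
          ((P2 hbar)^[2] (fun p => (f00 p : ℂ) * ψ p)) q) +
        ((f10 q : ℂ) * (P1 hbar (P2 hbar ψ)) q +
          (P1 hbar (P2 hbar (fun p => (f10 p : ℂ) * ψ p))) q) +
        ((f20 q : ℂ) * ((P1 hbar)^[2] ψ) q +
          ((P1 hbar)^[2] (fun p => (f20 p : ℂ) * ψ p)) q)) +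
    (f02 q : ℂ) * ψ q

open scoped ContDiff

section Smoothness

variable {E F : Type*} [NormedAddCommGroup E] [NormedSpace ℝ E]
  [NormedAddCommGroup F] [NormedSpace ℝ F]

@[fun_prop]
theorem ContDiff.differentiable_of_smooth {f : E → F} (hf : ContDiff ℝ ∞ f) :
    Differentiable ℝ f :=
  hf.differentiable (by simp)

@[fun_prop]
theorem ContDiff.contDiff_two_of_smooth {f : E → F} (hf : ContDiff ℝ ∞ f) : ContDiff ℝ 2 f :=
  hf.of_le (WithTop.coe_le_coe.mpr le_top)

@[fun_prop]
theorem ContDiff.ofReal {n : WithTop ℕ∞} {f : E → ℝ} (hf : ContDiff ℝ n f) :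
    ContDiff ℝ n fun x => (f x : ℂ) :=
  Complex.ofRealCLM.contDiff.comp hf

theorem ContDiff.fderiv_apply_const {f : E → F} (hf : ContDiff ℝ ∞ f) (v : E) :
    ContDiff ℝ ∞ fun x => fderiv ℝ f x v :=
  (hf.fderiv_right (by simp)).clm_apply contDiff_const

end Smoothness

section DirectionalDerivative

variable {E F A : Type*} [NormedAddCommGroup E] [NormedSpace ℝ E] [NormedAddCommGroup F]
  [NormedSpace ℝ F] [NormedCommRing A] [NormedAlgebra ℝ A] {f g : E → A}

theorem fderiv_apply_fun_mul (hf : Differentiable ℝ f) (hg : Differentiable ℝ g) (q v : E) :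
    fderiv ℝ (fun p => f p * g p) q v = fderiv ℝ f q v * g q + f q * fderiv ℝ g q v := by
  rw [fderiv_fun_mul (hf q) (hg q)]
  simp [add_comm, mul_comm]

theorem fderiv_apply_fun_add (hf : Differentiable ℝ f) (hg : Differentiable ℝ g) (q v : E) :
    fderiv ℝ (fun p => f p + g p) q v = fderiv ℝ f q v + fderiv ℝ g q v := by
  rw [fderiv_fun_add (hf q) (hg q)]
  rfl

theorem fderiv_apply_fun_sub (hf : Differentiable ℝ f) (hg : Differentiable ℝ g) (q v : E) :
    fderiv ℝ (fun p => f p - g p) q v = fderiv ℝ f q v - fderiv ℝ g q v := by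
  rw [fderiv_fun_sub (hf q) (hg q)]
  rfl

theorem fderiv_apply_ofReal {f : E → ℝ} {q : E} (hf : DifferentiableAt ℝ f q) (v : E) :
    fderiv ℝ (fun p => (f p : ℂ)) q v = fderiv ℝ f q v := by
  have h := (Complex.ofRealCLM.hasFDerivAt.comp q hf.hasFDerivAt).fderiv
  simp only [Function.comp_def, Complex.ofRealCLM_apply] at h
  simp [h]

theorem fderiv_apply_comm {f : E → F} (hf : ContDiff ℝ 2 f) (q v w : E) :
    fderiv ℝ (fun p => fderiv ℝ f p w) q v = fderiv ℝ (fun p => fderiv ℝ f p v) q w := by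
  have hdiff : Differentiable ℝ (fderiv ℝ f) :=
    (hf.fderiv_right (m := 1) le_rfl).differentiable one_ne_zero
  have hsymm : IsSymmSndFDerivAt ℝ f q :=
    hf.contDiffAt.isSymmSndFDerivAt (by simp [minSmoothness_of_isRCLikeNormedField])
  simp only [fderiv_clm_apply (hdiff q) (differentiableAt_const _), add_apply,
    ContinuousLinearMap.flip_apply]
  simpa using hsymm v w

theorem fderiv_apply_one_zero {F : ℝ × ℝ → E} {q : ℝ × ℝ} (hF : DifferentiableAt ℝ F q) :
    fderiv ℝ F q (1, 0) = deriv (fun t => F (t, q.2)) q.1 :=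
  ((hF.hasFDerivAt.comp_hasDerivAt q.1
    ((hasDerivAt_id q.1).prodMk (hasDerivAt_const q.1 q.2))).deriv).symm

theorem fderiv_apply_zero_one {F : ℝ × ℝ → E} {q : ℝ × ℝ} (hF : DifferentiableAt ℝ F q) :
    fderiv ℝ F q (0, 1) = deriv (fun t => F (q.1, t)) q.2 :=
  ((hF.hasFDerivAt.comp_hasDerivAt q.2
    ((hasDerivAt_const q.2 q.1).prodMk (hasDerivAt_id q.2))).deriv).symm

end DirectionalDerivative

section PartialDerivatives

variable {f g : ℝ × ℝ → ℝ} {φ χ : ℝ × ℝ → ℂ}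

@[fun_prop] theorem contDiff_pdx (hf : ContDiff ℝ ∞ f) : ContDiff ℝ ∞ (pdx f) :=
  hf.fderiv_apply_const _
@[fun_prop] theorem contDiff_pdy (hf : ContDiff ℝ ∞ f) : ContDiff ℝ ∞ (pdy f) :=
  hf.fderiv_apply_const _
@[fun_prop] theorem contDiff_pdxC (hφ : ContDiff ℝ ∞ φ) : ContDiff ℝ ∞ (pdxC φ) :=
  hφ.fderiv_apply_const _
@[fun_prop] theorem contDiff_pdyC (hφ : ContDiff ℝ ∞ φ) : ContDiff ℝ ∞ (pdyC φ) :=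
  hφ.fderiv_apply_const _

theorem pdx_add (hf : Differentiable ℝ f) (hg : Differentiable ℝ g) :
    pdx (fun p => f p + g p) = fun q => pdx f q + pdx g q :=
  funext fun q => fderiv_apply_fun_add hf hg q _
theorem pdy_add (hf : Differentiable ℝ f) (hg : Differentiable ℝ g) :
    pdy (fun p => f p + g p) = fun q => pdy f q + pdy g q :=
  funext fun q => fderiv_apply_fun_add hf hg q _
theorem pdxC_add (hφ : Differentiable ℝ φ) (hχ : Differentiable ℝ χ) :
    pdxC (fun p => φ p + χ p) = fun q => pdxC φ q + pdxC χ q :=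
  funext fun q => fderiv_apply_fun_add hφ hχ q _
theorem pdyC_add (hφ : Differentiable ℝ φ) (hχ : Differentiable ℝ χ) :
    pdyC (fun p => φ p + χ p) = fun q => pdyC φ q + pdyC χ q :=
  funext fun q => fderiv_apply_fun_add hφ hχ q _

theorem pdx_sub (hf : Differentiable ℝ f) (hg : Differentiable ℝ g) :
    pdx (fun p => f p - g p) = fun q => pdx f q - pdx g q :=
  funext fun q => fderiv_apply_fun_sub hf hg q _
theorem pdy_sub (hf : Differentiable ℝ f) (hg : Differentiable ℝ g) :
    pdy (fun p => f p - g p) = fun q => pdy f q - pdy g q :=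
  funext fun q => fderiv_apply_fun_sub hf hg q _

theorem pdx_mul (hf : Differentiable ℝ f) (hg : Differentiable ℝ g) :
    pdx (fun p => f p * g p) = fun q => pdx f q * g q + f q * pdx g q :=
  funext fun q => fderiv_apply_fun_mul hf hg q _
theorem pdy_mul (hf : Differentiable ℝ f) (hg : Differentiable ℝ g) :
    pdy (fun p => f p * g p) = fun q => pdy f q * g q + f q * pdy g q :=
  funext fun q => fderiv_apply_fun_mul hf hg q _
theorem pdxC_mul (hφ : Differentiable ℝ φ) (hχ : Differentiable ℝ χ) :
    pdxC (fun p => φ p * χ p) = fun q => pdxC φ q * χ q + φ q * pdxC χ q :=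
  funext fun q => fderiv_apply_fun_mul hφ hχ q _
theorem pdyC_mul (hφ : Differentiable ℝ φ) (hχ : Differentiable ℝ χ) :
    pdyC (fun p => φ p * χ p) = fun q => pdyC φ q * χ q + φ q * pdyC χ q :=
  funext fun q => fderiv_apply_fun_mul hφ hχ q _

theorem pdx_neg : pdx (fun p => -f p) = fun q => -pdx f q := by
  ext q; simp [pdx, fderiv_fun_neg]
theorem pdy_neg : pdy (fun p => -f p) = fun q => -pdy f q := by
  ext q; simp [pdy, fderiv_fun_neg]

theorem pdx_const (c : ℝ) : pdx (fun _ => c) = fun _ => 0 := by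
  ext q; simp [pdx]
theorem pdy_const (c : ℝ) : pdy (fun _ => c) = fun _ => 0 := by
  ext q; simp [pdy]
theorem pdxC_const (c : ℂ) : pdxC (fun _ => c) = fun _ => 0 := by
  ext q; simp [pdxC]
theorem pdyC_const (c : ℂ) : pdyC (fun _ => c) = fun _ => 0 := by
  ext q; simp [pdyC]

theorem pdxC_ofReal (hf : Differentiable ℝ f) :
    pdxC (fun p => (f p : ℂ)) = fun q => (pdx f q : ℂ) :=
  funext fun q => fderiv_apply_ofReal (hf q) _
theorem pdyC_ofReal (hf : Differentiable ℝ f) :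
    pdyC (fun p => (f p : ℂ)) = fun q => (pdy f q : ℂ) :=
  funext fun q => fderiv_apply_ofReal (hf q) _

theorem pdy_pdx (hf : ContDiff ℝ 2 f) : pdy (pdx f) = pdx (pdy f) :=
  funext fun q => fderiv_apply_comm hf q _ _
theorem pdyC_pdxC (hφ : ContDiff ℝ 2 φ) : pdyC (pdxC φ) = pdxC (pdyC φ) :=
  funext fun q => fderiv_apply_comm hφ q _ _

end PartialDerivatives

section SeparatedProducts

variable {u w : ℝ → ℝ}

theorem pdx_mul_fst_snd (hu : Differentiable ℝ u) (hw : Differentiable ℝ w) :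
    pdx (fun p => u p.1 * w p.2) = fun q => deriv u q.1 * w q.2 := by
  ext q
  rw [pdx, fderiv_apply_one_zero (by fun_prop)]
  simp [hu q.1]

theorem pdy_mul_fst_snd (hu : Differentiable ℝ u) (hw : Differentiable ℝ w) :
    pdy (fun p => u p.1 * w p.2) = fun q => u q.1 * deriv w q.2 := by
  ext q
  rw [pdy, fderiv_apply_zero_one (by fun_prop)]
  simp [hw q.2]

theorem iterate_pdy_mul_fst_snd (hu : Differentiable ℝ u) (hw : ContDiff ℝ ∞ w) (l : ℕ) :
    pdy^[l] (fun p => u p.1 * w p.2) = fun q => u q.1 * deriv^[l] w q.2 := by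
  induction l generalizing w with
  | zero => rfl
  | succ l ih =>
    rw [Function.iterate_succ_apply, pdy_mul_fst_snd hu (by fun_prop),
      ih (contDiff_infty_iff_deriv.mp hw).2, Function.iterate_succ_apply]

theorem iterate_pdx_mul_fst_snd (hu : ContDiff ℝ ∞ u) (hw : Differentiable ℝ w) (k : ℕ) :
    pdx^[k] (fun p => u p.1 * w p.2) = fun q => deriv^[k] u q.1 * w q.2 := by
  induction k generalizing u with
  | zero => rfl
  | succ k ih =>
    rw [Function.iterate_succ_apply, pdx_mul_fst_snd (by fun_prop) hw,
      ih (contDiff_infty_iff_deriv.mp hu).2, Function.iterate_succ_apply]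

end SeparatedProducts

theorem iterate_deriv_sub_pow_self (a : ℝ) (k n : ℕ) :
    deriv^[k] (fun t => (t - a) ^ n) a = if k = n then (n.factorial : ℝ) else 0 := by
  rw [← iteratedDeriv_eq_iterate, iteratedDeriv_comp_sub_const (f := fun t => t ^ n)]
  dsimp only
  rw [sub_self, iteratedDeriv_fun_pow_zero, Nat.cast_ite, Nat.cast_zero]

section IteratedPartialDerivatives

variable {f : ℝ × ℝ → ℝ}

theorem contDiff_iterate_pdy (hf : ContDiff ℝ ∞ f) (l : ℕ) : ContDiff ℝ ∞ (pdy^[l] f) :=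
  Function.Iterate.rec (fun g => ContDiff ℝ ∞ g) hf (fun _ hg => contDiff_pdy hg) l

theorem iterate_pdyC_ofReal (hf : ContDiff ℝ ∞ f) (l : ℕ) :
    pdyC^[l] (fun p => (f p : ℂ)) = fun q => (pdy^[l] f q : ℂ) := by
  induction l generalizing f with
  | zero => rfl
  | succ l ih =>
    rw [Function.iterate_succ_apply, pdyC_ofReal (by fun_prop), ih (contDiff_pdy hf),
      Function.iterate_succ_apply]

theorem iterate_pdxC_ofReal (hf : ContDiff ℝ ∞ f) (k : ℕ) :
    pdxC^[k] (fun p => (f p : ℂ)) = fun q => (pdx^[k] f q : ℂ) := by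
  induction k generalizing f with
  | zero => rfl
  | succ k ih =>
    rw [Function.iterate_succ_apply, pdxC_ofReal (by fun_prop), ih (contDiff_pdx hf),
      Function.iterate_succ_apply]

end IteratedPartialDerivatives

section DifferentialOperators

def multiIndicesLE (N : ℕ) : Finset (ℕ × ℕ) :=
  (Finset.range (N + 1) ×ˢ Finset.range (N + 1)).filter fun ij => ij.1 + ij.2 ≤ N

theorem multiIndicesLE_two :
    multiIndicesLE 2 = {(2, 0), (1, 1), (0, 2), (1, 0), (0, 1), (0, 0)} := by
  decide

theorem multiIndicesLE_three :
    multiIndicesLE 3 =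
      {(0, 3), (1, 2), (2, 1), (3, 0), (2, 0), (1, 1), (0, 2), (1, 0), (0, 1), (0, 0)} := by
  decide

def diffOp (S : Finset (ℕ × ℕ)) (c : ℕ × ℕ → ℝ × ℝ → ℝ) (ψ : ℝ × ℝ → ℂ) : ℝ × ℝ → ℂ :=
  fun q => ∑ ij ∈ S, (c ij q : ℂ) * pdxC^[ij.1] (pdyC^[ij.2] ψ) q

def monomialAt (s : ℝ × ℝ) (ij : ℕ × ℕ) : ℝ × ℝ → ℂ :=
  fun p => (((p.1 - s.1) ^ ij.1 * (p.2 - s.2) ^ ij.2 : ℝ) : ℂ)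

theorem contDiff_monomialAt (s : ℝ × ℝ) (ij : ℕ × ℕ) : ContDiff ℝ ∞ (monomialAt s ij) := by
  unfold monomialAt
  fun_prop

theorem iterate_pdxC_iterate_pdyC_monomialAt_self (s : ℝ × ℝ) (ij kl : ℕ × ℕ) :
    pdxC^[kl.1] (pdyC^[kl.2] (monomialAt s ij)) s =
      if kl = ij then (ij.1.factorial * ij.2.factorial : ℂ) else 0 := by
  have hu : ContDiff ℝ ∞ fun t : ℝ => (t - s.1) ^ ij.1 := by fun_prop
  have hw : ContDiff ℝ ∞ fun t : ℝ => (t - s.2) ^ ij.2 := by fun_prop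
  unfold monomialAt
  rw [iterate_pdyC_ofReal (by fun_prop), iterate_pdxC_ofReal (contDiff_iterate_pdy (by fun_prop) _),
    iterate_pdy_mul_fst_snd hu.differentiable_of_smooth hw,
    iterate_pdx_mul_fst_snd hu (by fun_prop)]
  simp only [iterate_deriv_sub_pow_self, Prod.ext_iff]
  split_ifs <;> simp_all

/-- Testing against the monomials centred at a point isolates the coefficients one at a time. -/
theorem diffOp_eq_zero_iff {S : Finset (ℕ × ℕ)} {c : ℕ × ℕ → ℝ × ℝ → ℝ} :
    (∀ ψ, ContDiff ℝ ∞ ψ → diffOp S c ψ = 0) ↔ ∀ ij ∈ S, c ij = 0 := by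
  constructor
  · intro h ij hij
    ext s
    have hs := congrFun (h _ (contDiff_monomialAt s ij)) s
    simp only [diffOp, iterate_pdxC_iterate_pdyC_monomialAt_self, mul_ite, mul_zero,
      Finset.sum_ite_eq', if_pos hij, Pi.zero_apply] at hs
    simpa [Nat.factorial_ne_zero] using hs
  · intro h ψ _
    ext q
    exact Finset.sum_eq_zero fun ij hij => by simp [h ij hij]

end DifferentialOperators

section CommutatorWithHamiltonian

def laplacianXY (f : ℝ × ℝ → ℝ) : ℝ × ℝ → ℝ := fun q => pdx (pdx f) q + pdy (pdy f) q

/-- Coefficients of `[L, Ĥ]` for `L = ∑ c_{ij} ∂ₓⁱ∂ᵧʲ`: the kinetic part is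
`ħ² ∑ (Δc_{ij} + 2 ∇c_{ij}·∇) ∂ₓⁱ∂ᵧʲ`, and `[L, V]` contributes the derivatives of `V`. -/
def hopCommCoeff (hbar : ℝ) (V : ℝ × ℝ → ℝ) (c : ℕ × ℕ → ℝ × ℝ → ℝ) :
    ℕ × ℕ → ℝ × ℝ → ℝ
  | (3, 0) => fun q => hbar ^ 2 * (2 * pdx (c (2, 0)) q)
  | (2, 1) => fun q => hbar ^ 2 * (2 * pdy (c (2, 0)) q + 2 * pdx (c (1, 1)) q)
  | (1, 2) => fun q => hbar ^ 2 * (2 * pdy (c (1, 1)) q + 2 * pdx (c (0, 2)) q)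
  | (0, 3) => fun q => hbar ^ 2 * (2 * pdy (c (0, 2)) q)
  | (2, 0) => fun q => hbar ^ 2 * (laplacianXY (c (2, 0)) q + 2 * pdx (c (1, 0)) q)
  | (1, 1) => fun q =>
      hbar ^ 2 * (laplacianXY (c (1, 1)) q + 2 * pdy (c (1, 0)) q + 2 * pdx (c (0, 1)) q)
  | (0, 2) => fun q => hbar ^ 2 * (laplacianXY (c (0, 2)) q + 2 * pdy (c (0, 1)) q)
  | (1, 0) => fun q => hbar ^ 2 * (laplacianXY (c (1, 0)) q + 2 * pdx (c (0, 0)) q) +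
      (2 * c (2, 0) q * pdx V q + c (1, 1) q * pdy V q)
  | (0, 1) => fun q => hbar ^ 2 * (laplacianXY (c (0, 1)) q + 2 * pdy (c (0, 0)) q) +
      (c (1, 1) q * pdx V q + 2 * c (0, 2) q * pdy V q)
  | (0, 0) => fun q => hbar ^ 2 * laplacianXY (c (0, 0)) q +
      (c (2, 0) q * pdx (pdx V) q + c (1, 1) q * pdx (pdy V) q + c (0, 2) q * pdy (pdy V) q +
        c (1, 0) q * pdx V q + c (0, 1) q * pdy V q)
  | _ => fun _ => 0

theorem diffOp_Hop_sub_Hop_diffOp {hbar : ℝ} {V : ℝ × ℝ → ℝ} (hV : ContDiff ℝ ∞ V)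
    {c : ℕ × ℕ → ℝ × ℝ → ℝ} (hc : ∀ ij, ContDiff ℝ ∞ (c ij))
    {ψ : ℝ × ℝ → ℂ} (hψ : ContDiff ℝ ∞ ψ) :
    diffOp (multiIndicesLE 2) c (Hop hbar V ψ) - Hop hbar V (diffOp (multiIndicesLE 2) c ψ) =
      diffOp (multiIndicesLE 3) (hopCommCoeff hbar V c) ψ := by
  have h20 := hc (2, 0)
  have h11 := hc (1, 1)
  have h02 := hc (0, 2)
  have h10 := hc (1, 0)
  have h01 := hc (0, 1)
  have h00 := hc (0, 0)
  ext q
  rw [multiIndicesLE_two, multiIndicesLE_three]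
  unfold diffOp Hop
  simp (disch := decide) only [Finset.sum_insert, Finset.sum_singleton]
  simp only [hopCommCoeff, laplacianXY, Function.iterate_succ, Function.iterate_zero,
    Function.comp_apply, id, Pi.sub_apply]
  simp (disch := fun_prop) only [pdxC_add, pdyC_add, pdxC_mul, pdyC_mul, pdxC_const, pdyC_const,
    pdxC_ofReal, pdyC_ofReal, pdyC_pdxC]
  push_cast
  ring

end CommutatorWithHamiltonian

section NormalOrdering

/-- The coefficients of `X` once all derivatives are moved to the right; the `ħ²` terms come from
the derivatives that fall on `f_{j,0}` in `p̂₁^j p̂₂^{2−j}(f_{j,0} ψ)`. -/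
def X2coeff (hbar : ℝ) (f00 f10 f20 f02 : ℝ × ℝ → ℝ) : ℕ × ℕ → ℝ × ℝ → ℝ
  | (2, 0) => fun q => -hbar ^ 2 * f20 q
  | (1, 1) => fun q => -hbar ^ 2 * f10 q
  | (0, 2) => fun q => -hbar ^ 2 * f00 q
  | (1, 0) => fun q => -hbar ^ 2 * pdx f20 q - hbar ^ 2 / 2 * pdy f10 q
  | (0, 1) => fun q => -hbar ^ 2 * pdy f00 q - hbar ^ 2 / 2 * pdx f10 q
  | (0, 0) => fun q =>
      f02 q - hbar ^ 2 / 2 * (pdx (pdx f20) q + pdx (pdy f10) q + pdy (pdy f00) q)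
  | _ => fun _ => 0

variable {hbar : ℝ} {f00 f10 f20 f02 : ℝ × ℝ → ℝ}

theorem contDiff_X2coeff (h00 : ContDiff ℝ ∞ f00) (h10 : ContDiff ℝ ∞ f10)
    (h20 : ContDiff ℝ ∞ f20) (h02 : ContDiff ℝ ∞ f02) (ij : ℕ × ℕ) :
    ContDiff ℝ ∞ (X2coeff hbar f00 f10 f20 f02 ij) := by
  unfold X2coeff
  split <;> fun_prop

theorem X2op_eq_diffOp (h00 : ContDiff ℝ ∞ f00) (h10 : ContDiff ℝ ∞ f10)
    (h20 : ContDiff ℝ ∞ f20) {ψ : ℝ × ℝ → ℂ} (hψ : ContDiff ℝ ∞ ψ) :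
    X2op hbar f00 f10 f20 f02 ψ = diffOp (multiIndicesLE 2) (X2coeff hbar f00 f10 f20 f02) ψ := by
  ext q
  rw [multiIndicesLE_two]
  unfold diffOp X2op P1 P2
  simp (disch := decide) only [Finset.sum_insert, Finset.sum_singleton]
  simp only [X2coeff, Function.iterate_succ, Function.iterate_zero, Function.comp_apply, id]
  simp (disch := fun_prop) only [pdxC_add, pdyC_add, pdxC_mul, pdyC_mul, pdxC_const, pdyC_const,
    pdxC_ofReal, pdyC_ofReal]
  push_cast
  ring_nf
  simp only [Complex.I_sq]
  ring

end NormalOrdering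

/-- The Killing equations of the classical quadratic integral
`f_{2,0} p₁² + f_{1,0} p₁p₂ + f_{0,0} p₂²`. -/
def IsKillingTensor (f00 f10 f20 : ℝ × ℝ → ℝ) : Prop :=
  (∀ q, pdy f00 q = 0) ∧ (∀ q, pdx f00 q + pdy f10 q = 0) ∧ (∀ q, pdx f10 q + pdy f20 q = 0) ∧
    ∀ q, pdx f20 q = 0

namespace IsKillingTensor

variable {f00 f10 f20 : ℝ × ℝ → ℝ}

theorem first_derivs (hK : IsKillingTensor f00 f10 f20) :
    pdy f00 = (fun _ => 0) ∧ pdy f10 = (fun q => -pdx f00 q) ∧ pdx f10 = (fun q => -pdy f20 q) ∧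
      pdx f20 = fun _ => 0 := by
  obtain ⟨h1, h2, h3, h4⟩ := hK
  refine ⟨funext h1, funext fun q => ?_, funext fun q => ?_, funext h4⟩ <;> linarith [h2 q, h3 q]

theorem higher_derivs (hK : IsKillingTensor f00 f10 f20) (h10 : ContDiff ℝ ∞ f10)
    (h20 : ContDiff ℝ ∞ f20) :
    pdx (pdy f20) = (fun _ => 0) ∧ pdy (pdy f20) = pdx (pdx f00) ∧
      pdx (pdx (pdx f00)) = fun _ => 0 := by
  obtain ⟨-, h01, h10', h20'⟩ := hK.first_derivs
  have hxy : pdx (pdy f20) = fun _ => 0 := by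
    rw [← pdy_pdx (by fun_prop), h20', pdy_const]
  have hyy : pdy (pdy f20) = pdx (pdx f00) := by
    have h20y : pdy f20 = fun q => -pdx f10 q := by
      rw [h10']
      simp
    rw [h20y, pdy_neg, pdy_pdx (by fun_prop), h01, pdx_neg]
    simp
  refine ⟨hxy, hyy, ?_⟩
  rw [← hyy, ← pdy_pdx (by fun_prop), hxy, pdy_const]

end IsKillingTensor

section DeterminingEquations

variable {hbar : ℝ} {V f00 f10 f20 f02 : ℝ × ℝ → ℝ}

local notation "𝒞" => hopCommCoeff hbar V (X2coeff hbar f00 f10 f20 f02)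

theorem hopCommCoeff_X2coeff_third_order (h00 : ContDiff ℝ ∞ f00) (h10 : ContDiff ℝ ∞ f10)
    (h20 : ContDiff ℝ ∞ f20) :
    𝒞 (0, 3) = (fun q => -2 * hbar ^ 4 * pdy f00 q) ∧
      𝒞 (1, 2) = (fun q => -2 * hbar ^ 4 * (pdx f00 q + pdy f10 q)) ∧
      𝒞 (2, 1) = (fun q => -2 * hbar ^ 4 * (pdx f10 q + pdy f20 q)) ∧
      𝒞 (3, 0) = fun q => -2 * hbar ^ 4 * pdx f20 q := by
  simp (disch := fun_prop) only [hopCommCoeff, X2coeff, pdx_mul, pdy_mul, pdx_const, pdy_const]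
  refine ⟨?_, ?_, ?_, ?_⟩ <;> ext q <;> ring

theorem hopCommCoeff_X2coeff_second_order_eq_zero (hK : IsKillingTensor f00 f10 f20)
    (h00 : ContDiff ℝ ∞ f00) (h10 : ContDiff ℝ ∞ f10) (h20 : ContDiff ℝ ∞ f20) :
    𝒞 (2, 0) = 0 ∧ 𝒞 (1, 1) = 0 ∧ 𝒞 (0, 2) = 0 := by
  obtain ⟨k00, k10, k01, k20⟩ := hK.first_derivs
  obtain ⟨kxy, kyy, -⟩ := hK.higher_derivs h10 h20
  simp (disch := fun_prop) only [hopCommCoeff, X2coeff, laplacianXY, pdx_mul, pdy_mul, pdx_const,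
    pdy_const, pdx_add, pdy_add, pdx_sub, pdy_sub, pdx_neg, pdy_neg, pdy_pdx, k00, k10, k01, k20,
    kxy, kyy]
  refine ⟨?_, ?_, ?_⟩ <;> ext q <;> simp only [Pi.zero_apply] <;> ring

theorem hopCommCoeff_X2coeff_first_order (hK : IsKillingTensor f00 f10 f20)
    (h00 : ContDiff ℝ ∞ f00) (h10 : ContDiff ℝ ∞ f10) (h20 : ContDiff ℝ ∞ f20)
    (h02 : ContDiff ℝ ∞ f02) :
    𝒞 (1, 0) = (fun q => hbar ^ 2 * (2 * pdx f02 q - (2 * f20 q * pdx V q + f10 q * pdy V q))) ∧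
      𝒞 (0, 1) = fun q => hbar ^ 2 * (2 * pdy f02 q - (f10 q * pdx V q + 2 * f00 q * pdy V q)) := by
  obtain ⟨k00, k10, k01, k20⟩ := hK.first_derivs
  obtain ⟨kxy, kyy, kxxx⟩ := hK.higher_derivs h10 h20
  simp (disch := fun_prop) only [hopCommCoeff, X2coeff, laplacianXY, pdx_mul, pdy_mul, pdx_const,
    pdy_const, pdx_sub, pdy_sub, pdx_add, pdy_add, pdx_neg, pdy_neg, pdy_pdx, k00, k10, k01, k20,
    kxy, kyy, kxxx]
  refine ⟨?_, ?_⟩ <;> ext q <;> ring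

theorem hopCommCoeff_X2coeff_zero_order_eq_zero (hK : IsKillingTensor f00 f10 f20)
    (hV : ContDiff ℝ ∞ V) (h00 : ContDiff ℝ ∞ f00) (h10 : ContDiff ℝ ∞ f10)
    (h20 : ContDiff ℝ ∞ f20) (h02 : ContDiff ℝ ∞ f02)
    (hy : ∀ q, 2 * pdy f02 q = f10 q * pdx V q + 2 * f00 q * pdy V q)
    (hx : ∀ q, 2 * pdx f02 q = 2 * f20 q * pdx V q + f10 q * pdy V q) :
    𝒞 (0, 0) = 0 := by
  obtain ⟨k00, k10, k01, k20⟩ := hK.first_derivs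
  obtain ⟨-, -, kxxx⟩ := hK.higher_derivs h10 h20
  have ky : pdy f02 = fun q => 1 / 2 * (f10 q * pdx V q) + f00 q * pdy V q :=
    funext fun q => by linarith [hy q]
  have kx : pdx f02 = fun q => f20 q * pdx V q + 1 / 2 * (f10 q * pdy V q) :=
    funext fun q => by linarith [hx q]
  simp (disch := fun_prop) only [hopCommCoeff, X2coeff, laplacianXY, pdx_mul, pdy_mul, pdx_const,
    pdy_const, pdx_sub, pdy_sub, pdx_add, pdy_add, pdx_neg, pdy_neg, pdy_pdx, k00, k10, k01, k20,
    kxxx, kx, ky]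
  ext q
  simp only [Pi.zero_apply]
  ring

theorem hopCommCoeff_X2coeff_eq_zero_iff (hb : hbar ≠ 0) (hV : ContDiff ℝ ∞ V)
    (h00 : ContDiff ℝ ∞ f00) (h10 : ContDiff ℝ ∞ f10) (h20 : ContDiff ℝ ∞ f20)
    (h02 : ContDiff ℝ ∞ f02) :
    (∀ ij ∈ multiIndicesLE 3, 𝒞 ij = 0) ↔
      IsKillingTensor f00 f10 f20 ∧
        (∀ q, 2 * pdy f02 q = f10 q * pdx V q + 2 * f00 q * pdy V q) ∧
        ∀ q, 2 * pdx f02 q = 2 * f20 q * pdx V q + f10 q * pdy V q := by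
  have hK_iff : (𝒞 (0, 3) = 0 ∧ 𝒞 (1, 2) = 0 ∧ 𝒞 (2, 1) = 0 ∧ 𝒞 (3, 0) = 0) ↔
      IsKillingTensor f00 f10 f20 := by
    obtain ⟨c03, c12, c21, c30⟩ :=
      hopCommCoeff_X2coeff_third_order (hbar := hbar) (V := V) (f02 := f02) h00 h10 h20
    have h4 : -2 * hbar ^ 4 ≠ 0 := mul_ne_zero (by norm_num) (pow_ne_zero 4 hb)
    simp only [c03, c12, c21, c30, IsKillingTensor, funext_iff, Pi.zero_apply, mul_eq_zero, h4,
      false_or]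
  have h2 : hbar ^ 2 ≠ 0 := pow_ne_zero 2 hb
  rw [multiIndicesLE_three]
  simp only [Finset.forall_mem_insert, Finset.mem_singleton, forall_eq]
  constructor
  · rintro ⟨e03, e12, e21, e30, -, -, -, e10, e01, -⟩
    have hK := hK_iff.mp ⟨e03, e12, e21, e30⟩
    obtain ⟨c10, c01⟩ :=
      hopCommCoeff_X2coeff_first_order (hbar := hbar) (V := V) hK h00 h10 h20 h02
    refine ⟨hK, fun q => ?_, fun q => ?_⟩
    · have := (mul_eq_zero.mp (congrFun (c01 ▸ e01) q)).resolve_left h2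
      linarith
    · have := (mul_eq_zero.mp (congrFun (c10 ▸ e10) q)).resolve_left h2
      linarith
  · rintro ⟨hK, hy, hx⟩
    obtain ⟨e03, e12, e21, e30⟩ := hK_iff.mpr hK
    obtain ⟨e20, e11, e02⟩ := hopCommCoeff_X2coeff_second_order_eq_zero (hbar := hbar) (V := V)
      (f02 := f02) hK h00 h10 h20
    obtain ⟨c10, c01⟩ :=
      hopCommCoeff_X2coeff_first_order (hbar := hbar) (V := V) hK h00 h10 h20 h02
    refine ⟨e03, e12, e21, e30, e20, e11, e02, ?_, ?_,
      hopCommCoeff_X2coeff_zero_order_eq_zero hK hV h00 h10 h20 h02 hy hx⟩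
    · ext q
      simp [c10, hx q]
    · ext q
      simp [c01, hy q]

end DeterminingEquations

/-- the second-order operator `X` commutes with `Ĥ` iff the classical
second-order determining equations hold; for `N = 2` there are no `ħ`-dependent
corrections. -/
theorem stmt_13 (hbar : ℝ) (hb : hbar ≠ 0)
    (V : ℝ × ℝ → ℝ) (hV : ContDiff ℝ (⊤ : ℕ∞) V)
    (f00 f10 f20 f02 : ℝ × ℝ → ℝ)
    (h00 : ContDiff ℝ (⊤ : ℕ∞) f00) (h10 : ContDiff ℝ (⊤ : ℕ∞) f10)
    (h20 : ContDiff ℝ (⊤ : ℕ∞) f20) (h02 : ContDiff ℝ (⊤ : ℕ∞) f02) :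
    (∀ ψ : ℝ × ℝ → ℂ, ContDiff ℝ (⊤ : ℕ∞) ψ → ∀ q : ℝ × ℝ,
        X2op hbar f00 f10 f20 f02 (Hop hbar V ψ) q =
          Hop hbar V (X2op hbar f00 f10 f20 f02 ψ) q) ↔
      ((∀ q : ℝ × ℝ, pdy f00 q = 0) ∧
        (∀ q : ℝ × ℝ, pdx f00 q + pdy f10 q = 0) ∧
        (∀ q : ℝ × ℝ, pdx f10 q + pdy f20 q = 0) ∧
        (∀ q : ℝ × ℝ, pdx f20 q = 0) ∧
        (∀ q : ℝ × ℝ, 2 * pdy f02 q = f10 q * pdx V q + 2 * f00 q * pdy V q) ∧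
        (∀ q : ℝ × ℝ, 2 * pdx f02 q = 2 * f20 q * pdx V q + f10 q * pdy V q)) := by
  have hc := contDiff_X2coeff (hbar := hbar) h00 h10 h20 h02
  calc _ ↔ ∀ ψ, ContDiff ℝ ∞ ψ →
        diffOp (multiIndicesLE 3) (hopCommCoeff hbar V (X2coeff hbar f00 f10 f20 f02)) ψ = 0 := by
        refine forall₂_congr fun ψ hψ => ?_
        have hHψ : ContDiff ℝ ∞ (Hop hbar V ψ) := by
          unfold Hop
          fun_prop
        rw [X2op_eq_diffOp h00 h10 h20 hHψ, X2op_eq_diffOp h00 h10 h20 hψ,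
          ← diffOp_Hop_sub_Hop_diffOp hV hc hψ, sub_eq_zero, funext_iff]
    _ ↔ ∀ ij ∈ multiIndicesLE 3, hopCommCoeff hbar V (X2coeff hbar f00 f10 f20 f02) ij = 0 :=
        diffOp_eq_zero_iff
    _ ↔ _ := by
        rw [hopCommCoeff_X2coeff_eq_zero_iff hb hV h00 h10 h20 h02, IsKillingTensor]
        simp only [and_assoc]
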